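/- Let (G, M, I) be a formal context K, let A1, A2 ⊆ M, and let K1 be the context obtained from K by adjoining a new object g1 (not in G) whose intent is A1 (i.e. g1' = A1 in K1). If there is no g ∈ G with A1 ∩ A2 ⊆ g', then I_{A2}^{K1} \ I_{A2}^{K} = {(A1 ∩ A2, m) | m ∈ (A1 \ A2) ∪ (A2 \ A1)}; that is, the new A2-crucial implications are exactly A1 ∩ A2 → m for m ∈ A1 \ A2 and A1 ∩ A2 → m̄ for m ∈ A2 \ A1. -/

import Mathlib

/-!
Adjoining the object `g1` adds to `C_{A2}` only the set `A1 ∩ A2`, and can only shrink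
closures. If no old intent contains `A1 ∩ A2`, this set is a new maximal element of `C_{A2}`
whose extent in `K1` is `{g1}`, so its closure is `A1` and its crucial implications are the
listed ones. Every other maximal element of `C_{A2}` in `K1` was already maximal in `K`, with at
least the same consequences there, so it contributes nothing new.
-/

namespace FCA

variable {G M : Type*}

/-- The intent `g'` of an object `g`: the set of attributes it has. -/
def intent [Fintype M] (I : G → M → Prop) [∀ g m, Decidable (I g m)] (g : G) : Finset M :=
  Finset.univ.filter (fun m => I g m)

/-- The extent `A'` of a set of attributes `A`. -/
def extent [Fintype G] (I : G → M → Prop) [∀ g m, Decidable (I g m)] (A : Finset M) :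
    Finset G :=
  Finset.univ.filter (fun g => ∀ m ∈ A, I g m)

/-- The closure `A''` of a set of attributes `A`. -/
def closure [Fintype G] [Fintype M] (I : G → M → Prop) [∀ g m, Decidable (I g m)]
    (A : Finset M) : Finset M :=
  Finset.univ.filter (fun m => ∀ g ∈ extent I A, I g m)

/-- `C_A = {A ∩ g' | g ∈ G}`. -/
def CA [Fintype G] [Fintype M] [DecidableEq M] (I : G → M → Prop) [∀ g m, Decidable (I g m)]
    (A : Finset M) : Finset (Finset M) :=
  Finset.univ.image (fun g => A ∩ intent I g)

/-- `MC_A`: the maximal elements of `C_A`. -/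
def MCA [Fintype G] [Fintype M] [DecidableEq M] (I : G → M → Prop) [∀ g m, Decidable (I g m)]
    (A : Finset M) : Finset (Finset M) :=
  (CA I A).filter (fun B => ∀ C ∈ CA I A, ¬ B ⊂ C)

/-- The set of `A`-crucial implications, encoded as pairs `(B, c)`:
`c ∈ B'' \ A` encodes the implication `B → c` and `c ∈ A \ B` encodes the
negative implication `B → c̄`. -/
def crucial [Fintype G] [Fintype M] [DecidableEq M] (I : G → M → Prop)
    [∀ g m, Decidable (I g m)] (A : Finset M) : Finset (Finset M × M) :=
  Finset.univ.filter
    (fun p => p.1 ∈ MCA I A ∧ p.2 ∈ (closure I p.1 \ A) ∪ (A \ p.1))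

/-- The incidence relation of the context `K1` obtained from `(G, M, I)` by adjoining
a new object (represented by `none : Option G`) whose intent is `A1`. -/
def extRel (I : G → M → Prop) (A1 : Finset M) [DecidableEq M] : Option G → M → Prop :=
  fun g m => g.elim (m ∈ A1) (fun h => I h m)

instance (I : G → M → Prop) [∀ g m, Decidable (I g m)] [DecidableEq M] (A1 : Finset M) :
    ∀ g m, Decidable (extRel I A1 g m) := fun g m => by
  cases g <;> unfold extRel <;> dsimp <;> infer_instance

section Extension

variable (I : G → M → Prop) [∀ g m, Decidable (I g m)]

@[simp]
lemma mem_intent [Fintype M] {g : G} {m : M} : m ∈ intent I g ↔ I g m := by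
  simp [intent]

lemma mem_extent [Fintype G] {A : Finset M} {g : G} : g ∈ extent I A ↔ ∀ m ∈ A, I g m := by
  simp [extent]

lemma mem_closure [Fintype G] [Fintype M] {B : Finset M} {m : M} :
    m ∈ closure I B ↔ ∀ g ∈ extent I B, I g m := by
  simp [closure]

variable [Fintype M] [DecidableEq M] (A1 : Finset M)

@[simp]
lemma intent_extRel_none : intent (extRel I A1) none = A1 := by
  ext m; simp [extRel]

@[simp]
lemma intent_extRel_some (g : G) : intent (extRel I A1) (some g) = intent I g := by
  ext m; simp [extRel]

variable [Fintype G]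

lemma mem_CA {A B : Finset M} : B ∈ CA I A ↔ ∃ g, A ∩ intent I g = B := by
  simp [CA]

lemma mem_MCA {A B : Finset M} : B ∈ MCA I A ↔ B ∈ CA I A ∧ ∀ C ∈ CA I A, ¬ B ⊂ C := by
  simp [MCA]

lemma mem_crucial {A : Finset M} {p : Finset M × M} :
    p ∈ crucial I A ↔ p.1 ∈ MCA I A ∧ p.2 ∈ (closure I p.1 \ A) ∪ (A \ p.1) := by
  simp [crucial]

lemma mem_CA_extRel {A B : Finset M} :
    B ∈ CA (extRel I A1) A ↔ B = A1 ∩ A ∨ B ∈ CA I A := by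
  simp only [mem_CA, Option.exists, intent_extRel_none, intent_extRel_some]
  rw [Finset.inter_comm, eq_comm]

lemma CA_subset_CA_extRel (A : Finset M) : CA I A ⊆ CA (extRel I A1) A :=
  fun _ hB => (mem_CA_extRel I A1).2 (Or.inr hB)

lemma closure_extRel_subset (B : Finset M) : closure (extRel I A1) B ⊆ closure I B := by
  intro m hm
  rw [mem_closure] at hm ⊢
  exact fun g hg => hm (some g) (by simpa [mem_extent, extRel] using hg)

lemma closure_extRel_eq {B : Finset M} (hB : B ⊆ A1) (h : ∀ g, ¬ B ⊆ intent I g) :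
    closure (extRel I A1) B = A1 := by
  have hextent : extent (extRel I A1) B = {none} := by
    ext (_ | g)
    · simpa [mem_extent, extRel] using fun m hm => hB hm
    · simpa [mem_extent, extRel] using
        fun hg : ∀ m ∈ B, I g m => h g fun m hm => (mem_intent I).2 (hg m hm)
  ext m
  simp [mem_closure, hextent, extRel]

lemma mem_MCA_of_mem_MCA_extRel {A B : Finset M} (hB : B ∈ MCA (extRel I A1) A)
    (hold : B ∈ CA I A) : B ∈ MCA I A :=
  (mem_MCA I).2 ⟨hold, fun C hC => ((mem_MCA _).1 hB).2 C (CA_subset_CA_extRel I A1 A hC)⟩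

lemma mem_crucial_of_mem_crucial_extRel {A : Finset M} {p : Finset M × M}
    (hp : p ∈ crucial (extRel I A1) A) (hne : p.1 ≠ A1 ∩ A) : p ∈ crucial I A := by
  obtain ⟨hB, hm⟩ := (mem_crucial _).1 hp
  have hold : p.1 ∈ CA I A :=
    ((mem_CA_extRel I A1).1 ((mem_MCA _).1 hB).1).resolve_left hne
  refine (mem_crucial I).2 ⟨mem_MCA_of_mem_MCA_extRel I A1 hB hold, ?_⟩
  exact Finset.union_subset_union
    (Finset.sdiff_subset_sdiff (closure_extRel_subset I A1 p.1) le_rfl) le_rfl hm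

section NoOldObject

variable {I A1} {A : Finset M} (h : ¬ ∃ g : G, A1 ∩ A ⊆ intent I g)
include h

lemma inter_notMem_CA : A1 ∩ A ∉ CA I A := by
  rw [mem_CA]
  rintro ⟨g, hg⟩
  exact h ⟨g, hg ▸ Finset.inter_subset_right⟩

lemma inter_mem_MCA_extRel : A1 ∩ A ∈ MCA (extRel I A1) A := by
  refine (mem_MCA _).2 ⟨(mem_CA_extRel I A1).2 (Or.inl rfl), ?_⟩
  intro C hC hlt
  rcases (mem_CA_extRel I A1).1 hC with rfl | hold
  · exact hlt.ne rfl
  · obtain ⟨g, rfl⟩ := (mem_CA I).1 hold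
    exact h ⟨g, hlt.subset.trans Finset.inter_subset_right⟩

lemma inter_mem_crucial_extRel_iff {m : M} :
    (A1 ∩ A, m) ∈ crucial (extRel I A1) A ↔ m ∈ (A1 \ A) ∪ (A \ A1) := by
  have hclosure : closure (extRel I A1) (A1 ∩ A) = A1 :=
    closure_extRel_eq I A1 Finset.inter_subset_left fun g hg => h ⟨g, hg⟩
  simp only [mem_crucial, inter_mem_MCA_extRel h, hclosure, true_and, Finset.mem_union,
    Finset.mem_sdiff, Finset.mem_inter]
  tauto

lemma inter_notMem_crucial {m : M} : (A1 ∩ A, m) ∉ crucial I A :=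
  fun hp => inter_notMem_CA h ((mem_MCA I).1 ((mem_crucial I).1 hp).1).1

end NoOldObject

end Extension

/-- if no old object `g ∈ G` satisfies `A1 ∩ A2 ⊆ g'`, then the new
`A2`-crucial implications arising from adjoining a new object with intent `A1` are
exactly `A1 ∩ A2 → m` for `m ∈ A1 \ A2` and `A1 ∩ A2 → m̄` for `m ∈ A2 \ A1`. -/
theorem stmt8 [Fintype G] [Fintype M] [DecidableEq M] (I : G → M → Prop)
    [∀ g m, Decidable (I g m)] (A1 A2 : Finset M)
    (h : ¬ ∃ g : G, A1 ∩ A2 ⊆ intent I g) :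
    crucial (extRel I A1) A2 \ crucial I A2 =
      ((A1 \ A2) ∪ (A2 \ A1)).image (fun m => (A1 ∩ A2, m)) := by
  ext ⟨B, m⟩
  simp only [Finset.mem_sdiff, Finset.mem_image, Prod.mk.injEq]
  constructor
  · rintro ⟨hnew, hold⟩
    obtain rfl : B = A1 ∩ A2 := by
      by_contra hB
      exact hold (mem_crucial_of_mem_crucial_extRel I A1 hnew hB)
    exact ⟨m, (inter_mem_crucial_extRel_iff h).1 hnew, rfl, rfl⟩
  · rintro ⟨m, hm, rfl, rfl⟩
    exact ⟨(inter_mem_crucial_extRel_iff h).2 hm, inter_notMem_crucial h⟩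

end FCA
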